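/- arXiv:2504.09400 — 7 statements merged into one kernel-verified Lean document; each statement's English description precedes it below -/
import Mathlib

section
/- Let X and Y be sets equipped with functions Ht_X : X → ℝ_{>0} and Ht_Y : Y → ℝ_{>0} such that for every real B the sets {x ∈ X : Ht_X(x) ≤ B} and {y ∈ Y : Ht_Y(y) ≤ B} are finite. Let c_X, c_Y > 0 and α_X > α_Y > 0 be real numbers, and let β_X, β_Y be real numbers with β_Y ≥ 0. Assume that #{x ∈ X : Ht_X(x) ≤ B} ∼ c_X·B^{α_X}·(log B)^{β_X} and #{y ∈ Y : Ht_Y(y) ≤ B} ∼ c_Y·B^{α_Y}·(log B)^{β_Y} as B → ∞. Then the series S = Σ_{y ∈ Y} Ht_Y(y)^{−α_X} converges, S > 0, and #{(x,y) ∈ X × Y : Ht_X(x)·Ht_Y(y) ≤ B} ∼ c_X·S·B^{α_X}·(log B)^{β_X} as B → ∞. -/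
/-!
Write `N_X(t) = #{x | Ht_X x ≤ t}`. Counting pairs fibre by fibre over `Y` gives
`#{(x, y) | Ht_X x · Ht_Y y ≤ B} = ∑_y N_X(B / Ht_Y y)`, and since `t ↦ t^α_X (log t)^β_X` is
regularly varying, each term divided by `c_X B^α_X (log B)^β_X` tends to `Ht_Y(y)^(-α_X)`.
The limit may be taken inside the sum (Tannery's theorem) because a Potter-type bound
dominates the terms by `D · Ht_Y(y)^(-α)` for a fixed `α_Y < α < α_X`, and this majorant is
summable: the `k`-th smallest height `h` satisfies `k ≤ N_Y(h) ≪ h^α'` for `α_Y < α' < α`.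
-/

open Filter Real Asymptotics Topology

lemma exists_pos_forall_le {Z : Type*} (h : Z → ℝ) (hpos : ∀ z, 0 < h z)
    (hfin : {z | h z ≤ 1}.Finite) : ∃ m, 0 < m ∧ ∀ z, m ≤ h z := by
  classical
  set s := insert 1 (hfin.toFinset.image h)
  have hs : s.Nonempty := Finset.insert_nonempty _ _
  refine ⟨s.min' hs, (Finset.lt_min'_iff _ _).2 ?_, fun z => ?_⟩
  · simp only [s, Finset.mem_insert, Finset.mem_image, Set.Finite.mem_toFinset]
    rintro _ (rfl | ⟨z, -, rfl⟩)
    exacts [one_pos, hpos z]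
  · by_cases hz : h z ≤ 1
    · exact s.min'_le _ (by simpa [s] using Or.inr ⟨z, hz, rfl⟩)
    · exact (s.min'_le 1 (Finset.mem_insert_self _ _)).trans (not_le.1 hz).le

lemma monotone_ncard_setOf_le {Z : Type*} {h : Z → ℝ} (hfin : ∀ B : ℝ, {z | h z ≤ B}.Finite) :
    Monotone fun B => ({z | h z ≤ B}.ncard : ℝ) :=
  fun _ B hAB => Nat.cast_le.2 (Set.ncard_le_ncard (fun _ hz => le_trans hz hAB) (hfin B))

lemma ncard_eq_tsum_ncard_fiber {X Y : Type*} {s : Set (X × Y)} (hs : s.Finite) :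
    (s.ncard : ℝ) = ∑' y, ({x | (x, y) ∈ s}.ncard : ℝ) := by
  classical
  rw [tsum_eq_sum (s := hs.toFinset.image Prod.snd) fun y hy => ?_]
  · rw [Set.ncard_eq_toFinset_card s hs, Finset.card_eq_sum_card_image Prod.snd, Nat.cast_sum]
    refine Finset.sum_congr rfl fun y _ => ?_
    rw [← Set.ncard_coe_finset]
    refine congrArg _ (Set.ncard_congr (fun x _ => (x, y)) (fun x hx => ?_) ?_ ?_).symm
    · simpa using hx
    · simp
    · simp only [Finset.coe_filter, Set.Finite.mem_toFinset]
      rintro ⟨x, y'⟩ ⟨hxy, rfl⟩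
      exact ⟨x, hxy, rfl⟩
  · simp only [Finset.mem_image, Set.Finite.mem_toFinset, not_exists, not_and] at hy
    have hempty : {x | (x, y) ∈ s} = ∅ :=
      Set.eq_empty_iff_forall_notMem.2 fun x hx => hy (x, y) hx rfl
    simp [hempty]

lemma finite_setOf_mul_le {X Y : Type*} {HtX : X → ℝ} {HtY : Y → ℝ} {m n : ℝ}
    (hm : 0 < m) (hn : 0 < n) (hmX : ∀ x, m ≤ HtX x) (hnY : ∀ y, n ≤ HtY y)
    (hXfin : ∀ B : ℝ, {x | HtX x ≤ B}.Finite) (hYfin : ∀ B : ℝ, {y | HtY y ≤ B}.Finite)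
    (B : ℝ) : {p : X × Y | HtX p.1 * HtY p.2 ≤ B}.Finite := by
  refine ((hXfin (B / n)).prod (hYfin (B / m))).subset fun ⟨x, y⟩ (hp : _ ≤ B) => ?_
  constructor
  · rw [Set.mem_ofPred_eq, le_div_iff₀ hn]
    exact (mul_le_mul_of_nonneg_left (hnY y) (hm.trans_le (hmX x)).le).trans hp
  · rw [Set.mem_ofPred_eq, le_div_iff₀ hm, mul_comm]
    exact (mul_le_mul_of_nonneg_right (hmX x) (hn.trans_le (hnY y)).le).trans hp

-- The `k`-th smallest height `h z` satisfies `k ≤ #{w | h w ≤ h z}`.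
lemma sum_ncard_rpow_neg_le {Z : Type*} {h : Z → ℝ} (hfin : ∀ B : ℝ, {z | h z ≤ B}.Finite)
    {p : ℝ} (hp : 0 ≤ p) (u : Finset Z) :
    ∑ z ∈ u, ({w | h w ≤ h z}.ncard : ℝ) ^ (-p) ≤
      ∑ k ∈ Finset.range u.card, ((k : ℝ) + 1) ^ (-p) := by
  classical
  induction u using Finset.induction_on_max_value h with
  | empty => simp
  | insert z u hz hmax ih =>
    rw [Finset.sum_insert hz, Finset.card_insert_of_notMem hz, Finset.sum_range_succ]
    have hcard : (u.card : ℝ) + 1 ≤ {w | h w ≤ h z}.ncard := by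
      rw [← Nat.cast_add_one, ← Finset.card_insert_of_notMem hz, Nat.cast_le,
        ← Set.ncard_coe_finset]
      refine Set.ncard_le_ncard (fun w hw => ?_) (hfin _)
      rcases Finset.mem_insert.1 hw with rfl | hw
      exacts [le_refl (h w), hmax w hw]
    have := rpow_le_rpow_of_nonpos (by positivity) hcard (neg_nonpos.2 hp)
    linarith

lemma summable_rpow_neg_of_ncard_le {Z : Type*} {h : Z → ℝ} (hpos : ∀ z, 0 < h z)
    (hfin : ∀ B : ℝ, {z | h z ≤ B}.Finite) {C α s : ℝ} (hC : 0 < C) (hα : 0 < α)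
    (hαs : α < s) (hcount : ∀ z, ({w | h w ≤ h z}.ncard : ℝ) ≤ C * h z ^ α) :
    Summable fun z => h z ^ (-s) := by
  set p := s / α
  have hp : 1 < p := (one_lt_div hα).2 hαs
  have hζ : Summable fun k : ℕ => ((k : ℝ) + 1) ^ (-p) := by
    have := (summable_nat_add_iff 1).2 (Real.summable_nat_rpow.2 (neg_lt_neg hp))
    exact_mod_cast this
  have hterm : ∀ z, h z ^ (-s) ≤ C ^ p * ({w | h w ≤ h z}.ncard : ℝ) ^ (-p) := by
    intro z
    have hrank : (1 : ℝ) ≤ {w | h w ≤ h z}.ncard :=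
      Nat.one_le_cast.2 ((Set.ncard_pos (hfin _)).2 ⟨z, le_refl (h z)⟩)
    have hle : ({w | h w ≤ h z}.ncard : ℝ) / C ≤ h z ^ α := by
      rw [div_le_iff₀ hC, mul_comm]; exact hcount z
    calc h z ^ (-s) = (h z ^ α) ^ (-p) := by
          rw [← rpow_mul (hpos z).le, mul_neg, mul_div_cancel₀ _ hα.ne']
      _ ≤ (({w | h w ≤ h z}.ncard : ℝ) / C) ^ (-p) :=
          rpow_le_rpow_of_nonpos (by positivity) hle (by linarith)
      _ = C ^ p * ({w | h w ≤ h z}.ncard : ℝ) ^ (-p) := by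
          rw [div_rpow (by positivity) hC.le, rpow_neg hC.le, div_inv_eq_mul, mul_comm]
  refine Summable.of_nonneg_of_le (fun z => (rpow_pos_of_pos (hpos z) _).le) hterm ?_
  refine summable_of_sum_le (c := C ^ p * ∑' k : ℕ, ((k : ℝ) + 1) ^ (-p))
    (fun z => by positivity) fun u => ?_
  rw [← Finset.mul_sum]
  refine mul_le_mul_of_nonneg_left ?_ (by positivity)
  exact (sum_ncard_rpow_neg_le hfin (by linarith) u).trans
    (hζ.sum_le_tsum _ fun k _ => by positivity)

lemma exists_forall_le_mul_rpow {φ : ℝ → ℝ} (hφ : Monotone φ) {m α : ℝ} (hm : 0 < m)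
    (hα : 0 ≤ α) (hO : φ =O[atTop] fun t => t ^ α) :
    ∃ C, 0 < C ∧ ∀ t ≥ m, φ t ≤ C * t ^ α := by
  obtain ⟨c, hc, hcO⟩ := hO.exists_pos
  obtain ⟨t₀, ht₀⟩ := eventually_atTop.1 (hcO.bound.and (eventually_ge_atTop m))
  set K := |φ t₀| / m ^ α
  refine ⟨c + K, by positivity, fun t hmt => ?_⟩
  have htα : 0 ≤ t ^ α := rpow_nonneg (hm.le.trans hmt) α
  have hKt : 0 ≤ K * t ^ α := by positivity
  rcases le_total t₀ t with ht | ht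
  · have hφt := (ht₀ t ht).1
    rw [Real.norm_eq_abs, Real.norm_eq_abs, abs_of_nonneg htα] at hφt
    linarith [le_abs_self (φ t)]
  · have hmt₀ : m ^ α ≤ t ^ α := rpow_le_rpow hm.le hmt hα
    calc φ t ≤ |φ t₀| := (hφ ht).trans (le_abs_self _)
      _ = K * m ^ α := by rw [div_mul_cancel₀ _ (by positivity)]
      _ ≤ K * t ^ α := by gcongr
      _ ≤ (c + K) * t ^ α := by nlinarith

lemma isBigO_mul_rpow_mul_log_rpow {c a b α : ℝ} (haα : a < α) :
    (fun t => c * t ^ a * log t ^ b) =O[atTop] fun t => t ^ α := by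
  refine ((isBigO_const_mul_self c (fun t => t ^ a) atTop).mul_isLittleO
    (isLittleO_log_rpow_rpow_atTop b (sub_pos.2 haα))).isBigO.congr' .rfl ?_
  filter_upwards [eventually_gt_atTop 0] with t ht
  rw [← rpow_add ht, add_sub_cancel]

theorem summable_rpow_neg_of_tendsto {Y : Type*} {HtY : Y → ℝ} (hHtY : ∀ y, 0 < HtY y)
    (hYfin : ∀ B : ℝ, {y | HtY y ≤ B}.Finite) {c a b s : ℝ} (ha : 0 < a) (has : a < s)
    (hY : Tendsto (fun B => ({y | HtY y ≤ B}.ncard : ℝ) / (c * B ^ a * log B ^ b))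
      atTop (𝓝 1)) :
    Summable fun y => HtY y ^ (-s) := by
  obtain ⟨α, haα, hαs⟩ := exists_between has
  obtain ⟨m, hm, hmY⟩ := exists_pos_forall_le HtY hHtY (hYfin 1)
  obtain ⟨C, hC, hCY⟩ := exists_forall_le_mul_rpow (monotone_ncard_setOf_le hYfin) hm
    (ha.trans haα).le ((isEquivalent_of_tendsto_one hY).isBigO.trans
      (isBigO_mul_rpow_mul_log_rpow haα))
  exact summable_rpow_neg_of_ncard_le hHtY hYfin hC (ha.trans haα) hαs
    fun y => hCY _ (hmY y)

lemma isEquivalent_rpow_mul_log_rpow_comp_div (a b : ℝ) {n : ℝ} (hn : 0 < n) :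
    (fun B => (B / n) ^ a * log (B / n) ^ b) ~[atTop]
      fun B => n ^ (-a) * (B ^ a * log B ^ b) := by
  have hlog : (fun B => log (B / n)) ~[atTop] fun B => |log B| := by
    have h : (fun B => log B - log n) ~[atTop] log :=
      IsEquivalent.refl.sub_isLittleO isLittleO_const_log_atTop
    refine (h.congr_left ?_).congr_right ?_
    · filter_upwards [eventually_gt_atTop 0] with B hB
      rw [log_div hB.ne' hn.ne']
    · filter_upwards [eventually_ge_atTop 1] with B hB
      rw [abs_of_nonneg (log_nonneg hB)]
  have hpow : (fun B => (B / n) ^ a) =ᶠ[atTop] fun B => n ^ (-a) * B ^ a := by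
    filter_upwards [eventually_gt_atTop 0] with B hB
    rw [div_rpow hB.le hn.le, rpow_neg hn.le, div_eq_inv_mul]
  refine (hpow.isEquivalent.mul (hlog.rpow (fun B => abs_nonneg _) (r := b))).congr_right ?_
  filter_upwards [eventually_ge_atTop 1] with B hB
  simp only [Pi.mul_apply, Pi.pow_apply, abs_of_nonneg (log_nonneg hB), mul_assoc]

lemma tendsto_comp_div_div {φ : ℝ → ℝ} {c a b h : ℝ} (hh : 0 < h)
    (hφ : Tendsto (fun B => φ B / (c * B ^ a * log B ^ b)) atTop (𝓝 1)) :
    Tendsto (fun B => φ (B / h) / (c * B ^ a * log B ^ b)) atTop (𝓝 (h ^ (-a))) := by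
  set f := fun B : ℝ => c * B ^ a * log B ^ b
  have hf : ∀ᶠ B in atTop, f B ≠ 0 :=
    (hφ.eventually_ne one_ne_zero).mono fun B hB h0 =>
      hB (by simp only [f] at h0; rw [h0, div_zero])
  have hcomp : (fun B => φ (B / h)) ~[atTop] fun B => f (B / h) :=
    (isEquivalent_of_tendsto_one hφ).comp_tendsto (tendsto_id.atTop_div_const hh)
  have hscale : (fun B => f (B / h)) ~[atTop] fun B => h ^ (-a) * f B := by
    refine ((IsEquivalent.refl (u := fun _ => c)).mul
      (isEquivalent_rpow_mul_log_rpow_comp_div a b hh)).congr_left ?_ |>.congr_right ?_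
    · exact Eventually.of_forall fun B => by simp only [Pi.mul_apply, f, mul_assoc]
    · exact Eventually.of_forall fun B => by simp only [Pi.mul_apply, f]; ring
  refine ((hcomp.trans hscale).div IsEquivalent.refl).symm.tendsto_nhds ?_
  refine tendsto_const_nhds.congr' (hf.mono fun B hB => ?_)
  rw [Pi.div_apply, mul_div_assoc, div_self hB, mul_one]

lemma log_rpow_le_log_rpow_mul_rpow {b δ t T : ℝ} (ht : 1 < t) (hbt : |b| ≤ δ * log t)
    (htT : t ≤ T) : log t ^ b ≤ log T ^ b * (T / t) ^ δ := by
  have hlt : 0 < log t := log_pos ht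
  have hlT : log t ≤ log T := log_le_log (by linarith) htT
  have hlT0 : 0 < log T := hlt.trans_le hlT
  set x := log T / log t
  have hx : 1 ≤ x := (one_le_div hlt).2 hlT
  have hsplit : log t ^ b = log T ^ b * x ^ (-b) := by
    rw [rpow_neg (by linarith), ← inv_rpow (by linarith), inv_div,
      ← mul_rpow hlT0.le (div_nonneg hlt.le hlT0.le), mul_div_cancel₀ _ hlT0.ne']
  -- `log x ≤ x - 1` turns the ratio of logarithms into a power of `T / t`.
  have hxδ : x ^ |b| ≤ (T / t) ^ δ := by
    rw [rpow_def_of_pos (by linarith), rpow_def_of_pos (div_pos (by linarith) (by linarith)),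
      log_div (x := T) (by linarith) (by linarith)]
    refine exp_le_exp.2 ?_
    have hlogx : log x ≤ (log T - log t) / log t := by
      have := log_le_sub_one_of_pos (by linarith : 0 < x)
      rwa [sub_div, div_self hlt.ne']
    calc log x * |b| ≤ (log T - log t) / log t * (δ * log t) :=
          mul_le_mul hlogx hbt (abs_nonneg b) (div_nonneg (by linarith) hlt.le)
      _ = (log T - log t) * δ := by field_simp
  calc log t ^ b = log T ^ b * x ^ (-b) := hsplit
    _ ≤ log T ^ b * x ^ |b| :=
        mul_le_mul_of_nonneg_left (rpow_le_rpow_of_exponent_le hx (neg_le_abs b))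
          (rpow_nonneg hlT0.le _)
    _ ≤ log T ^ b * (T / t) ^ δ := mul_le_mul_of_nonneg_left hxδ (rpow_nonneg hlT0.le _)

lemma rpow_mul_log_rpow_le {a b δ t T : ℝ} (ht : 1 < t) (hbt : |b| ≤ δ * log t)
    (htT : t ≤ T) : t ^ a * log t ^ b ≤ T ^ a * log T ^ b * (t / T) ^ (a - δ) := by
  have ht0 : 0 < t := by linarith
  have hT0 : 0 < T := by linarith
  calc t ^ a * log t ^ b ≤ t ^ a * (log T ^ b * (T / t) ^ δ) := by
        gcongr
        exact log_rpow_le_log_rpow_mul_rpow ht hbt htT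
    _ = T ^ a * log T ^ b * (t / T) ^ (a - δ) := by
        rw [div_rpow hT0.le ht0.le, div_rpow ht0.le hT0.le, rpow_sub ht0, rpow_sub hT0]
        field_simp

lemma exists_le_mul_rpow_mul_div_rpow {φ : ℝ → ℝ} (hφ : Monotone φ) {m a b α : ℝ}
    (hm : 0 < m) (hzero : ∀ t < m, φ t = 0) (hα : 0 ≤ α) (hαa : α < a)
    (hO : φ =O[atTop] fun t => t ^ a * log t ^ b) :
    ∃ K t₀, 0 ≤ K ∧ ∀ T ≥ t₀, ∀ t, 0 < t → t ≤ T →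
      φ t ≤ K * (T ^ a * log T ^ b) * (t / T) ^ α := by
  obtain ⟨c, hc, hcO⟩ := hO.exists_pos
  have hlarge : ∀ᶠ t in atTop,
      φ t ≤ c * (t ^ a * log t ^ b) ∧ m ≤ t ∧ 1 < t ∧ |b| ≤ (a - α) * log t := by
    filter_upwards [hcO.bound, eventually_ge_atTop m, eventually_gt_atTop 1,
      (tendsto_log_atTop.const_mul_atTop (sub_pos.2 hαa)).eventually_ge_atTop |b|]
      with t hφt hmt ht1 hbt
    have hg : 0 ≤ t ^ a * log t ^ b := by have := log_pos ht1; positivity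
    rw [Real.norm_eq_abs, Real.norm_eq_abs, abs_of_nonneg hg] at hφt
    exact ⟨(le_abs_self _).trans hφt, hmt, ht1, hbt⟩
  obtain ⟨t₀, ht₀⟩ := eventually_atTop.1 hlarge
  obtain ⟨-, hmt₀, ht₀1, -⟩ := ht₀ t₀ le_rfl
  refine ⟨c * (t₀ / m) ^ α, t₀, by positivity, fun T hT t ht htT => ?_⟩
  have hT0 : 0 < T := by linarith
  rcases lt_or_ge t m with htm | htm
  · rw [hzero t htm]
    have : 0 ≤ log T := log_nonneg (by linarith)
    positivity
  -- Below `t₀` the count is frozen at its value at `t₀`, which costs the factor `(t₀ / m) ^ α`.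
  obtain ⟨hφt', -, ht'1, hbt'⟩ := ht₀ (max t t₀) (le_max_right _ _)
  have ht' : max t t₀ / T ≤ t₀ / m * (t / T) := by
    rw [← mul_div_assoc]
    refine div_le_div_of_nonneg_right (max_le ?_ ?_) hT0.le
    · exact le_mul_of_one_le_left ht.le ((one_le_div hm).2 hmt₀)
    · rw [div_mul_eq_mul_div, le_div_iff₀ hm]
      exact mul_le_mul_of_nonneg_left htm (by linarith)
  calc φ t ≤ φ (max t t₀) := hφ (le_max_left _ _)
    _ ≤ c * ((max t t₀) ^ a * log (max t t₀) ^ b) := hφt'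
    _ ≤ c * (T ^ a * log T ^ b * (max t t₀ / T) ^ (a - (a - α))) :=
        mul_le_mul_of_nonneg_left (rpow_mul_log_rpow_le ht'1 hbt' (max_le htT hT)) hc.le
    _ ≤ c * (T ^ a * log T ^ b * (t₀ / m * (t / T)) ^ α) := by
        rw [sub_sub_cancel]
        have : 0 ≤ log T := log_nonneg (by linarith)
        gcongr
    _ = c * (t₀ / m) ^ α * (T ^ a * log T ^ b) * (t / T) ^ α := by
        rw [mul_rpow (by positivity) (by positivity)]
        ring

lemma exists_eventually_le_mul_rpow_neg {φ : ℝ → ℝ} (hφ : Monotone φ) {m a b α n : ℝ}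
    (hm : 0 < m) (hzero : ∀ t < m, φ t = 0) (hα : 0 ≤ α) (hαa : α < a)
    (hO : φ =O[atTop] fun t => t ^ a * log t ^ b) (hn : 0 < n) :
    ∃ D, ∀ᶠ B in atTop, ∀ h ≥ n, φ (B / h) ≤ D * (B ^ a * log B ^ b) * h ^ (-α) := by
  obtain ⟨K, t₀, hK, hφK⟩ := exists_le_mul_rpow_mul_div_rpow hφ hm hzero hα hαa hO
  obtain ⟨C, hC⟩ := ((isEquivalent_rpow_mul_log_rpow_comp_div a b hn).isBigO.trans
    (isBigO_const_mul_self _ _ _)).bound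
  refine ⟨K * C * n ^ α, ?_⟩
  filter_upwards [hC, (tendsto_id.atTop_div_const hn).eventually_ge_atTop t₀,
    eventually_ge_atTop 1] with B hCB hBt₀ hB1 h hh
  have hB : 0 < B := by linarith
  have hh0 : 0 < h := hn.trans_le hh
  have hg : 0 ≤ B ^ a * log B ^ b := by have := log_nonneg hB1; positivity
  rw [Real.norm_eq_abs, Real.norm_eq_abs, abs_of_nonneg hg] at hCB
  have hratio : (B / h / (B / n)) ^ α = n ^ α * h ^ (-α) := by
    rw [div_div_div_cancel_left' _ _ hB.ne', div_rpow hn.le hh0.le, rpow_neg hh0.le,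
      div_eq_mul_inv]
  calc φ (B / h) ≤ K * ((B / n) ^ a * log (B / n) ^ b) * (B / h / (B / n)) ^ α :=
        hφK _ hBt₀ _ (div_pos hB hh0) (div_le_div_of_nonneg_left hB.le hn hh)
    _ ≤ K * (C * (B ^ a * log B ^ b)) * (n ^ α * h ^ (-α)) := by
        rw [hratio]
        exact mul_le_mul_of_nonneg_right (mul_le_mul_of_nonneg_left
          ((le_abs_self _).trans hCB) hK) (by positivity)
    _ = K * C * n ^ α * (B ^ a * log B ^ b) * h ^ (-α) := by ring

theorem tendsto_ncard_mul_le_div {X Y : Type*} {HtX : X → ℝ} {HtY : Y → ℝ}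
    (hHtX : ∀ x, 0 < HtX x) (hHtY : ∀ y, 0 < HtY y)
    (hXfin : ∀ B : ℝ, {x | HtX x ≤ B}.Finite) (hYfin : ∀ B : ℝ, {y | HtY y ≤ B}.Finite)
    {c a b α : ℝ} (hc : 0 < c) (hα : 0 ≤ α) (hαa : α < a)
    (hsum : Summable fun y => HtY y ^ (-α))
    (hX : Tendsto (fun B => ({x | HtX x ≤ B}.ncard : ℝ) / (c * B ^ a * log B ^ b))
      atTop (𝓝 1)) :
    Tendsto (fun B => ({p : X × Y | HtX p.1 * HtY p.2 ≤ B}.ncard : ℝ) /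
      (c * B ^ a * log B ^ b)) atTop (𝓝 (∑' y, HtY y ^ (-a))) := by
  obtain ⟨m, hm, hmX⟩ := exists_pos_forall_le HtX hHtX (hXfin 1)
  obtain ⟨n, hn, hnY⟩ := exists_pos_forall_le HtY hHtY (hYfin 1)
  set φ := fun t => ({x | HtX x ≤ t}.ncard : ℝ)
  have hzero : ∀ t < m, φ t = 0 := fun t ht => by
    have : {x | HtX x ≤ t} = ∅ :=
      Set.eq_empty_iff_forall_notMem.2 fun x hx => (ht.trans_le (hmX x)).not_ge hx
    simp [φ, this]
  have hO : φ =O[atTop] fun t => t ^ a * log t ^ b :=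
    (isEquivalent_of_tendsto_one hX).isBigO.trans
      ((isBigO_const_mul_self c _ _).congr_left fun t => (mul_assoc _ _ _).symm)
  obtain ⟨D, hD⟩ := exists_eventually_le_mul_rpow_neg (monotone_ncard_setOf_le hXfin) hm hzero
    hα hαa hO hn
  have hcount : ∀ B, ({p : X × Y | HtX p.1 * HtY p.2 ≤ B}.ncard : ℝ) =
      ∑' y, φ (B / HtY y) := fun B => by
    rw [ncard_eq_tsum_ncard_fiber (finite_setOf_mul_le hm hn hmX hnY hXfin hYfin B)]
    refine congrArg tsum (funext fun y => ?_)
    simp only [φ, le_div_iff₀ (hHtY y)]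
    rfl
  simp_rw [hcount, ← tsum_div_const]
  refine tendsto_tsum_of_dominated_convergence (hsum.mul_left (D / c))
    (fun y => tendsto_comp_div_div (hHtY y) hX) ?_
  filter_upwards [hD, eventually_gt_atTop 1] with B hB hB1 y
  have hlog : 0 < log B := log_pos hB1
  have hf : 0 < c * B ^ a * log B ^ b := by positivity
  rw [norm_div, Real.norm_of_nonneg (Nat.cast_nonneg _), Real.norm_of_nonneg hf.le,
    div_le_iff₀ hf]
  calc φ (B / HtY y) ≤ D * (B ^ a * log B ^ b) * HtY y ^ (-α) := hB _ (hnY y)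
    _ = D / c * HtY y ^ (-α) * (c * B ^ a * log B ^ b) := by field_simp

theorem stmt_1_general {X Y : Type*} (HtX : X → ℝ) (HtY : Y → ℝ)
    (hHtX : ∀ x, 0 < HtX x) (hHtY : ∀ y, 0 < HtY y)
    (hXfin : ∀ B : ℝ, {x : X | HtX x ≤ B}.Finite)
    (hYfin : ∀ B : ℝ, {y : Y | HtY y ≤ B}.Finite)
    (cX cY αX αY βX βY : ℝ) (hcX : 0 < cX)
    (hαY : 0 < αY) (hαXY : αY < αX)
    (hX : Tendsto (fun B : ℝ =>
        ({x : X | HtX x ≤ B}.ncard : ℝ) / (cX * B ^ αX * Real.log B ^ βX))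
      atTop (nhds 1))
    (hY : Tendsto (fun B : ℝ =>
        ({y : Y | HtY y ≤ B}.ncard : ℝ) / (cY * B ^ αY * Real.log B ^ βY))
      atTop (nhds 1)) :
    Summable (fun y : Y => HtY y ^ (-αX)) ∧
    0 < ∑' y : Y, HtY y ^ (-αX) ∧
    Tendsto (fun B : ℝ =>
        ({p : X × Y | HtX p.1 * HtY p.2 ≤ B}.ncard : ℝ) /
          (cX * (∑' y : Y, HtY y ^ (-αX)) * B ^ αX * Real.log B ^ βX))
      atTop (nhds 1) := by
  obtain ⟨α, hαYα, hααX⟩ := exists_between hαXY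
  have hsum : ∀ s, αY < s → Summable fun y => HtY y ^ (-s) :=
    fun s hs => summable_rpow_neg_of_tendsto hHtY hYfin hαY hs hY
  obtain ⟨B, hB⟩ := (hY.eventually_ne one_ne_zero).exists
  obtain ⟨y₀, -⟩ : {y | HtY y ≤ B}.Nonempty :=
    Set.nonempty_of_ncard_ne_zero fun h => hB (by simp [h])
  set S := ∑' y, HtY y ^ (-αX)
  have hS : 0 < S := (hsum αX hαXY).tsum_pos (fun y => (rpow_pos_of_pos (hHtY y) _).le) y₀
    (rpow_pos_of_pos (hHtY y₀) _)
  refine ⟨hsum αX hαXY, hS, ?_⟩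
  have key := (tendsto_ncard_mul_le_div hHtX hHtY hXfin hYfin hcX (hαY.trans hαYα).le hααX
    (hsum α hαYα) hX).div_const S
  rw [div_self hS.ne'] at key
  refine key.congr fun B => ?_
  rw [div_div]
  congr 1
  ring

/-- Product lemma, distinct exponents case: if
`#{x : Ht_X x ≤ B} ∼ c_X B^{α_X} (log B)^{β_X}` and
`#{y : Ht_Y y ≤ B} ∼ c_Y B^{α_Y} (log B)^{β_Y}` as `B → ∞`, with `c_X, c_Y > 0`,
`α_X > α_Y > 0` and `β_Y ≥ 0`, then the series `S = Σ_y Ht_Y(y)^{−α_X}` converges,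
`S > 0`, and `#{(x,y) : Ht_X x · Ht_Y y ≤ B} ∼ c_X S B^{α_X} (log B)^{β_X}`. -/
theorem stmt_1 {X Y : Type*} (HtX : X → ℝ) (HtY : Y → ℝ)
    (hHtX : ∀ x, 0 < HtX x) (hHtY : ∀ y, 0 < HtY y)
    (hXfin : ∀ B : ℝ, {x : X | HtX x ≤ B}.Finite)
    (hYfin : ∀ B : ℝ, {y : Y | HtY y ≤ B}.Finite)
    (cX cY αX αY βX βY : ℝ) (hcX : 0 < cX) (hcY : 0 < cY)
    (hαY : 0 < αY) (hαXY : αY < αX) (hβY : 0 ≤ βY)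
    (hX : Tendsto (fun B : ℝ =>
        ({x : X | HtX x ≤ B}.ncard : ℝ) / (cX * B ^ αX * Real.log B ^ βX))
      atTop (nhds 1))
    (hY : Tendsto (fun B : ℝ =>
        ({y : Y | HtY y ≤ B}.ncard : ℝ) / (cY * B ^ αY * Real.log B ^ βY))
      atTop (nhds 1)) :
    Summable (fun y : Y => HtY y ^ (-αX)) ∧
    0 < ∑' y : Y, HtY y ^ (-αX) ∧
    Tendsto (fun B : ℝ =>
        ({p : X × Y | HtX p.1 * HtY p.2 ≤ B}.ncard : ℝ) /
          (cX * (∑' y : Y, HtY y ^ (-αX)) * B ^ αX * Real.log B ^ βX))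
      atTop (nhds 1) :=
  stmt_1_general HtX HtY hHtX hHtY hXfin hYfin cX cY αX αY βX βY hcX hαY hαXY hX hY
end

section
/- Let K be a field of characteristic zero and let h₄, h₆, h₁₂ ∈ K be nonzero elements satisfying h₁₂² + 3h₆⁴ + h₄⁶ = 0. Set j = 16h₆⁴/(9h₄⁶). Then the quaternion algebras (−6j, −2(27j+16) | K) and (−6, 2 | K) are isomorphic as K-algebras. -/
/-!
Rescaling the generators `i ↦ x i`, `j ↦ y j` of a quaternion algebra by units multiplies
`i²` and `j²` by `x²` and `y²`. With `x = 4h₆²/(3h₄³)` one has `-6j = -6x²`, and the relation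
`h₁₂² = -(3h₆⁴ + h₄⁶)` gives `-2(27j + 16) = 32h₁₂²/h₄⁶ = 2y²` with `y = 4h₁₂/h₄³`.
-/

open scoped Quaternion

namespace QuaternionAlgebra

def scaleEquiv {R : Type*} [CommRing R] (c₁ c₂ c₃ : R) (x y : Rˣ) :
    ℍ[R, c₁ * x ^ 2, c₂ * x, c₃ * y ^ 2] ≃ₐ[R] ℍ[R, c₁, c₂, c₃] where
  toFun t := ⟨t.re, x * t.imI, y * t.imJ, ↑(x * y) * t.imK⟩
  invFun t := ⟨t.re, ↑x⁻¹ * t.imI, ↑y⁻¹ * t.imJ, ↑(x * y)⁻¹ * t.imK⟩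
  left_inv t := by ext <;> simp [← mul_assoc, -Units.val_mul, -mul_inv_rev]
  right_inv t := by ext <;> simp [← mul_assoc, -Units.val_mul, -mul_inv_rev]
  map_mul' s t := by
    ext <;> simp only [re_mul, imI_mul, imJ_mul, imK_mul, Units.val_mul, mk_mul_mk] <;> ring
  map_add' s t := by ext <;> simp only [re_add, imI_add, imJ_add, imK_add, mk_add_mk] <;> ring
  commutes' r := by ext <;> simp

end QuaternionAlgebra

/-- For a field `K` of characteristic zero and nonzero `h₄, h₆, h₁₂ ∈ K` with
`h₁₂² + 3h₆⁴ + h₄⁶ = 0`, setting `j = 16h₆⁴/(9h₄⁶)`, the quaternion algebras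
`(−6j, −2(27j+16) | K)` and `(−6, 2 | K)` are isomorphic as `K`-algebras. -/
theorem stmt_2 {K : Type*} [Field K] [CharZero K] (h₄ h₆ h₁₂ : K)
    (hh₄ : h₄ ≠ 0) (hh₆ : h₆ ≠ 0) (hh₁₂ : h₁₂ ≠ 0)
    (hrel : h₁₂ ^ 2 + 3 * h₆ ^ 4 + h₄ ^ 6 = 0)
    (j : K) (hj : j = 16 * h₆ ^ 4 / (9 * h₄ ^ 6)) :
    Nonempty (ℍ[K, -6 * j, -2 * (27 * j + 16)] ≃ₐ[K] ℍ[K, -6, 2]) := by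
  set x : Kˣ := Units.mk0 (4 * h₆ ^ 2 / (3 * h₄ ^ 3)) (by simp [hh₄, hh₆])
  set y : Kˣ := Units.mk0 (4 * h₁₂ / h₄ ^ 3) (by simp [hh₄, hh₁₂])
  have hi_sq : -6 * j = -6 * (x : K) ^ 2 := by
    simp only [x, Units.val_mk0, hj]
    field_simp
    ring
  have hj_sq : -2 * (27 * j + 16) = 2 * (y : K) ^ 2 := by
    simp only [y, Units.val_mk0, hj]
    field_simp
    linear_combination (-144 : K) * hrel
  have scale := QuaternionAlgebra.scaleEquiv (-6 : K) 0 2 x y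
  rw [zero_mul] at scale
  rw [hi_sq, hj_sq]
  exact ⟨scale⟩
end

section
/- Let K be a field of characteristic zero and let x, y, z ∈ K be nonzero elements satisfying z² + 3xy⁴ + x⁴ = 0. Set j = 16y⁴/(9x³). Then the quaternion algebras (−6j, −2(27j+16) | K) and (−6x, 2 | K) are isomorphic as K-algebras. -/
/-!
Rescaling the generators `i ↦ u i`, `j ↦ v j` by units identifies `(a, b | K)` with
`(u²a, v²b | K)`. With `u = 4y²/(3x²)` one has `-6j = -6x u²`, and with `v = 4z/x²` the relation
`z² + 3xy⁴ + x⁴ = 0` gives exactly `-2(27j + 16) = 2v²`.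
-/

open scoped Quaternion

namespace QuaternionAlgebra

variable {R A : Type*} [CommRing R] [Ring A] [Algebra R A] {c₁ c₂ c₃ d₁ d₂ d₃ : R}

@[simps i j k]
def Basis.scale (q : Basis A c₁ c₂ c₃) (u v : R)
    (h₁ : d₁ = u ^ 2 * c₁) (h₂ : d₂ = u * c₂) (h₃ : d₃ = v ^ 2 * c₃) : Basis A d₁ d₂ d₃ where
  i := u • q.i
  j := v • q.j
  k := (u * v) • q.k
  i_mul_i := by
    rw [smul_mul_smul_comm, q.i_mul_i, smul_add, smul_smul, smul_smul, smul_smul, h₁, h₂]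
    ring_nf
  j_mul_j := by rw [smul_mul_smul_comm, q.j_mul_j, smul_smul, h₃, sq]
  i_mul_j := by rw [smul_mul_smul_comm, q.i_mul_j]
  j_mul_i := by
    rw [smul_mul_smul_comm, q.j_mul_i, smul_sub, smul_smul, smul_smul, h₂, mul_comm v u]
    ring_nf

def equivOfScale (u v : Rˣ)
    (h₁ : d₁ = (u : R) ^ 2 * c₁) (h₂ : d₂ = u * c₂) (h₃ : d₃ = (v : R) ^ 2 * c₃) :
    ℍ[R, d₁, d₂, d₃] ≃ₐ[R] ℍ[R, c₁, c₂, c₃] :=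
  AlgEquiv.ofAlgHom ((Basis.self R).scale u v h₁ h₂ h₃).liftHom
    ((Basis.self R).scale ↑u⁻¹ ↑v⁻¹ (by simp [h₁, ← mul_assoc, ← mul_pow])
      (by simp [h₂, ← mul_assoc]) (by simp [h₃, ← mul_assoc, ← mul_pow])).liftHom
    (by ext <;> simp [Basis.lift])
    (by ext <;> simp [Basis.lift])

end QuaternionAlgebra

/-- For a field `K` of characteristic zero and nonzero `x, y, z ∈ K` with
`z² + 3xy⁴ + x⁴ = 0`, setting `j = 16y⁴/(9x³)`, the quaternion algebras
`(−6j, −2(27j+16) | K)` and `(−6x, 2 | K)` are isomorphic as `K`-algebras. -/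
theorem stmt_3 {K : Type*} [Field K] [CharZero K] (x y z : K)
    (hx : x ≠ 0) (hy : y ≠ 0) (hz : z ≠ 0)
    (hrel : z ^ 2 + 3 * x * y ^ 4 + x ^ 4 = 0)
    (j : K) (hj : j = 16 * y ^ 4 / (9 * x ^ 3)) :
    Nonempty (ℍ[K, -6 * j, -2 * (27 * j + 16)] ≃ₐ[K] ℍ[K, -6 * x, 2]) := by
  have hu : 4 * y ^ 2 / (3 * x ^ 2) ≠ 0 := by simp [hx, hy]
  have hv : 4 * z / x ^ 2 ≠ 0 := by simp [hx, hz]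
  have h₁ : -6 * j = (4 * y ^ 2 / (3 * x ^ 2)) ^ 2 * (-6 * x) := by
    subst hj; field_simp; ring
  have h₃ : -2 * (27 * j + 16) = (4 * z / x ^ 2) ^ 2 * 2 := by
    subst hj; field_simp
    linear_combination (-144) * hrel
  exact ⟨QuaternionAlgebra.equivOfScale (.mk0 _ hu) (.mk0 _ hv) h₁ (mul_zero _).symm h₃⟩
end

section
/- Let K be a field of characteristic zero and let x, y, z ∈ K be nonzero elements satisfying z² + 3y³ + x⁶y = 0. Set j = 16y²/(9x⁶). Then the quaternion algebras (−6j, −2(27j+16) | K) and (−6, 2y | K) are isomorphic as K-algebras. -/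
/-!
Both pairs of parameters differ by nonzero squares: `-6j = -6 · (4y/(3x³))²`, and since the
relation gives `z² = -y(3y² + x⁶)`, also `-2(27j + 16) = -32(3y² + x⁶)/x⁶ = 2y · (4z/(x³y))²`.
Rescaling the generators `i, j` of a quaternion algebra by units multiplies its parameters by
their squares.
-/

open scoped Quaternion

namespace QuaternionAlgebra

variable {R : Type*} [CommRing R]

@[simps i j k]
def Basis.rescale {a b a' b' : R} (c d : R) (ha : a * c ^ 2 = a') (hb : b * d ^ 2 = b') :
    Basis ℍ[R, a, b] a' 0 b' where
  i := ⟨0, c, 0, 0⟩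
  j := ⟨0, 0, d, 0⟩
  k := ⟨0, 0, 0, c * d⟩
  i_mul_i := by ext <;> simp [← ha]; ring
  j_mul_j := by ext <;> simp [← hb]; ring
  i_mul_j := by ext <;> simp
  j_mul_i := by ext <;> simp [mul_comm]

def rescaleEquiv (a b : R) (u v : Rˣ) : ℍ[R, a * u ^ 2, b * v ^ 2] ≃ₐ[R] ℍ[R, a, b] :=
  AlgEquiv.ofAlgHom (Basis.rescale (u : R) v rfl rfl).liftHom
    (Basis.rescale (↑u⁻¹ : R) ↑v⁻¹ (by simp [mul_assoc, ← mul_pow])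
      (by simp [mul_assoc, ← mul_pow])).liftHom
    (by ext <;> simp [Basis.lift]) (by ext <;> simp [Basis.lift])

theorem nonempty_algEquiv_of_eq_mul_sq {a b a' b' c d : R} (hc : IsUnit c) (hd : IsUnit d)
    (ha : a' = a * c ^ 2) (hb : b' = b * d ^ 2) : Nonempty (ℍ[R, a', b'] ≃ₐ[R] ℍ[R, a, b]) := by
  obtain ⟨u, rfl⟩ := hc
  obtain ⟨v, rfl⟩ := hd
  subst ha hb
  exact ⟨rescaleEquiv a b u v⟩

end QuaternionAlgebra

/-- For a field `K` of characteristic zero and nonzero `x, y, z ∈ K` with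
`z² + 3y³ + x⁶y = 0`, setting `j = 16y²/(9x⁶)`, the quaternion algebras
`(−6j, −2(27j+16) | K)` and `(−6, 2y | K)` are isomorphic as `K`-algebras. -/
theorem stmt_5 {K : Type*} [Field K] [CharZero K] (x y z : K)
    (hx : x ≠ 0) (hy : y ≠ 0) (hz : z ≠ 0)
    (hrel : z ^ 2 + 3 * y ^ 3 + x ^ 6 * y = 0)
    (j : K) (hj : j = 16 * y ^ 2 / (9 * x ^ 6)) :
    Nonempty (ℍ[K, -6 * j, -2 * (27 * j + 16)] ≃ₐ[K] ℍ[K, -6, 2 * y]) := by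
  have hc : 4 * y / (3 * x ^ 3) ≠ 0 := by simp [hx, hy]
  have hd : 4 * z / (x ^ 3 * y) ≠ 0 := by simp [hx, hy, hz]
  refine QuaternionAlgebra.nonempty_algEquiv_of_eq_mul_sq hc.isUnit hd.isUnit ?_ ?_
  · rw [hj]
    field_simp
    ring
  · rw [hj]
    field_simp
    linear_combination (-144 : K) * hrel
end

section
/- Let K be a field of characteristic zero and let x, y, z ∈ K be nonzero elements satisfying z² + 3xy³ + x⁴y = 0. Set j = 16y²/(9x³). Then the quaternion algebras (−6j, −2(27j+16) | K) and (−6x, 2y | K) are isomorphic as K-algebras. -/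
/-!
Rescaling the generators `i ↦ c i`, `j ↦ d j` identifies `(a c², b d² | K)` with `(a, b | K)`.
With `c = 4y / (3x²)` and `d = 4z / (x²y)` one has `-6j = -6x · c²`, and the curve relation
`z² = -3xy³ - x⁴y` turns `2y · d²` into `-2(27j + 16)`.
-/

open scoped Quaternion

namespace QuaternionAlgebra

def equivOfMulSq {K : Type*} [Field K] (a b c d : K) (hc : c ≠ 0) (hd : d ≠ 0) :
    ℍ[K, a * c ^ 2, b * d ^ 2] ≃ₐ[K] ℍ[K, a, b] where
  toFun q := ⟨q.re, c * q.imI, d * q.imJ, c * d * q.imK⟩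
  invFun q := ⟨q.re, c⁻¹ * q.imI, d⁻¹ * q.imJ, (c * d)⁻¹ * q.imK⟩
  left_inv q := by ext <;> field_simp
  right_inv q := by ext <;> field_simp
  map_mul' p q := by ext <;> simp only [re_mul, imI_mul, imJ_mul, imK_mul] <;> ring
  map_add' p q := by ext <;> simp [mul_add]
  commutes' r := by ext <;> simp [coe_algebraMap]

end QuaternionAlgebra

/-- For a field `K` of characteristic zero and nonzero `x, y, z ∈ K` with
`z² + 3xy³ + x⁴y = 0`, setting `j = 16y²/(9x³)`, the quaternion algebras
`(−6j, −2(27j+16) | K)` and `(−6x, 2y | K)` are isomorphic as `K`-algebras. -/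
theorem stmt_6 {K : Type*} [Field K] [CharZero K] (x y z : K)
    (hx : x ≠ 0) (hy : y ≠ 0) (hz : z ≠ 0)
    (hrel : z ^ 2 + 3 * x * y ^ 3 + x ^ 4 * y = 0)
    (j : K) (hj : j = 16 * y ^ 2 / (9 * x ^ 3)) :
    Nonempty (ℍ[K, -6 * j, -2 * (27 * j + 16)] ≃ₐ[K] ℍ[K, -6 * x, 2 * y]) := by
  have hc : 4 * y / (3 * x ^ 2) ≠ 0 := by simp [hx, hy]
  have hd : 4 * z / (x ^ 2 * y) ≠ 0 := by simp [hx, hy, hz]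
  have ha : -6 * j = -6 * x * (4 * y / (3 * x ^ 2)) ^ 2 := by
    rw [hj]; field_simp; ring
  have hb : -2 * (27 * j + 16) = 2 * y * (4 * z / (x ^ 2 * y)) ^ 2 := by
    rw [hj]; field_simp; linear_combination -144 * hrel
  rw [ha, hb]
  exact ⟨QuaternionAlgebra.equivOfMulSq _ _ _ _ hc hd⟩
end

section
/- Let A₆ = ℚ[h₄,h₆,h₁₂]/(h₁₂² + 3h₆⁴ + h₄⁶) and let σ be the ℚ-algebra involution of A₆ determined by σ(h₄) = −h₄, σ(h₆) = −h₆, σ(h₁₂) = h₁₂. Then the ℚ-algebra homomorphism ℚ[w,x,y,z] → A₆ given by w ↦ h₄h₆, x ↦ h₄², y ↦ h₆², z ↦ h₁₂ sends both z² + 3y² + x³ and w² − xy to 0 and induces a ℚ-algebra isomorphism ℚ[w,x,y,z]/(z² + 3y² + x³, w² − xy) ≅ A₆^σ, where A₆^σ is the subalgebra of σ-fixed elements of A₆. -/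
/-!
Write `a, b, c` for `h₄, h₆, h₁₂`, `τ` for the sign change `a, b ↦ -a, -b` of `ℚ[a,b,c]`, which
lifts `σ`, and `Φ : ℚ[w,x,y,z] → ℚ[a,b,c]` for `w, x, y, z ↦ ab, a², b², c`.

Every polynomial is `Φ u + a Φ v + b Φ s`, and the last two summands are `τ`-anti-invariant.
Since `2` is invertible, a class in `A₆` fixed by `σ` is therefore the class of `Φ u`: the image of
`Φ` in `A₆` is exactly `A₆^σ`.

Modulo `w² - xy` every polynomial is `r₀(x,y,z) + w r₁(x,y,z)`, which `Φ` sends to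
`r₀(a²,b²,c) + ab r₁(a²,b²,c)`. The sign change `a ↦ -a` separates the two summands and
`r ↦ r(a²,b²,c)` is injective, so `ker Φ = (w² - xy)`. Finally, if `Φ q = g f` with
`f = c² + 3b⁴ + a⁶`, then `g` is `τ`-invariant because `Φ q` and `f` are, so `g = Φ d` and
`q - d (z² + 3y² + x³) ∈ ker Φ`.
-/

open MvPolynomial

/-- The canonical ring `A₆ = ℚ[h₄,h₆,h₁₂]/(h₁₂² + 3h₆⁴ + h₄⁶)` of the Shimura curve of
discriminant 6; the variables `X 0, X 1, X 2` play the roles of `h₄, h₆, h₁₂`. -/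
noncomputable abbrev A6 : Type :=
  MvPolynomial (Fin 3) ℚ ⧸
    Ideal.span {(X 2 : MvPolynomial (Fin 3) ℚ) ^ 2 + 3 * X 1 ^ 4 + X 0 ^ 6}

/-- The class of `h₄` in `A₆`. -/
noncomputable def h4 : A6 := Ideal.Quotient.mk _ (X 0)

/-- The class of `h₆` in `A₆`. -/
noncomputable def h6 : A6 := Ideal.Quotient.mk _ (X 1)

/-- The class of `h₁₂` in `A₆`. -/
noncomputable def h12 : A6 := Ideal.Quotient.mk _ (X 2)

namespace ShimuraCurve6

section CommRing

variable {K : Type*} [CommRing K]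

noncomputable def negH4H6 : MvPolynomial (Fin 3) K →ₐ[K] MvPolynomial (Fin 3) K :=
  aeval ![-X 0, -X 1, X 2]

noncomputable def negH4 : MvPolynomial (Fin 3) K →ₐ[K] MvPolynomial (Fin 3) K :=
  aeval ![-X 0, X 1, X 2]

noncomputable def sqH4H6 : MvPolynomial (Fin 3) K →ₐ[K] MvPolynomial (Fin 3) K :=
  aeval ![X 0 ^ 2, X 1 ^ 2, X 2]

noncomputable def invariantMap : MvPolynomial (Fin 4) K →ₐ[K] MvPolynomial (Fin 3) K :=
  aeval ![X 0 * X 1, X 0 ^ 2, X 1 ^ 2, X 2]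

noncomputable def shimuraRel : MvPolynomial (Fin 3) K := X 2 ^ 2 + 3 * X 1 ^ 4 + X 0 ^ 6

noncomputable def invariantRel₁ : MvPolynomial (Fin 4) K := X 3 ^ 2 + 3 * X 2 ^ 2 + X 1 ^ 3

noncomputable def invariantRel₂ : MvPolynomial (Fin 4) K := X 0 ^ 2 - X 1 * X 2

theorem negH4H6_invariantMap (u : MvPolynomial (Fin 4) K) :
    negH4H6 (invariantMap u) = invariantMap u := by
  suffices h : (negH4H6 (K := K)).comp invariantMap = invariantMap from AlgHom.congr_fun h u
  ext i : 1
  fin_cases i <;> simp [negH4H6, invariantMap]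

theorem negH4H6_shimuraRel : negH4H6 (shimuraRel (K := K)) = shimuraRel := by
  simp [negH4H6, shimuraRel, map_ofNat]; ring

theorem shimuraRel_ne_zero [Nontrivial K] : shimuraRel (K := K) ≠ 0 := by
  intro h
  simpa [shimuraRel] using congrArg (eval ![0, 0, 1]) h

theorem invariantMap_invariantRel₁ : invariantMap (invariantRel₁ (K := K)) = shimuraRel := by
  simp [invariantMap, invariantRel₁, shimuraRel, map_ofNat]; ring

theorem invariantMap_invariantRel₂ : invariantMap (invariantRel₂ (K := K)) = 0 := by
  simp [invariantMap, invariantRel₂]; ring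

theorem invariantMap_rename_succ (r : MvPolynomial (Fin 3) K) :
    invariantMap (rename Fin.succ r) = sqH4H6 r := by
  rw [invariantMap, aeval_rename, sqH4H6]
  rfl

theorem negH4_sqH4H6 (r : MvPolynomial (Fin 3) K) : negH4 (sqH4H6 r) = sqH4H6 r := by
  suffices h : (negH4 (K := K)).comp sqH4H6 = sqH4H6 from AlgHom.congr_fun h r
  ext i : 1
  fin_cases i <;> simp [negH4, sqH4H6]

theorem sqH4H6_injective : Function.Injective (sqH4H6 (K := K)) := by
  let sqH12 : MvPolynomial (Fin 3) K →ₐ[K] MvPolynomial (Fin 3) K := aeval ![X 0, X 1, X 2 ^ 2]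
  have h : sqH12.comp sqH4H6 = expand 2 := by
    ext i : 1
    fin_cases i <;> simp [sqH12, sqH4H6]
  apply Function.Injective.of_comp (f := sqH12)
  rw [← AlgHom.coe_comp, h]
  exact expand_injective two_pos

theorem exists_eq_invariantMap_add (p : MvPolynomial (Fin 3) K) :
    ∃ u v s : MvPolynomial (Fin 4) K,
      p = invariantMap u + X 0 * invariantMap v + X 1 * invariantMap s := by
  induction p using MvPolynomial.induction_on with
  | C a => exact ⟨C a, 0, 0, by simp⟩
  | add p q hp hq =>
    obtain ⟨u, v, s, rfl⟩ := hp
    obtain ⟨u', v', s', rfl⟩ := hq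
    exact ⟨u + u', v + v', s + s', by simp only [map_add]; ring⟩
  | mul_X p i hp =>
    obtain ⟨u, v, s, rfl⟩ := hp
    fin_cases i
    · exact ⟨X 1 * v + X 0 * s, u, 0, by simp [invariantMap]; ring⟩
    · exact ⟨X 0 * v + X 2 * s, 0, u, by simp [invariantMap]; ring⟩
    · exact ⟨X 3 * u, X 3 * v, X 3 * s, by simp [invariantMap]; ring⟩

theorem exists_sub_mem_span_invariantRel₂ (q : MvPolynomial (Fin 4) K) :
    ∃ r₀ r₁ : MvPolynomial (Fin 3) K,
      q - (rename Fin.succ r₀ + X 0 * rename Fin.succ r₁) ∈ Ideal.span {invariantRel₂} := by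
  induction q using MvPolynomial.induction_on with
  | C a => exact ⟨C a, 0, by simp⟩
  | add p q hp hq =>
    obtain ⟨r₀, r₁, hp⟩ := hp
    obtain ⟨s₀, s₁, hq⟩ := hq
    refine ⟨r₀ + s₀, r₁ + s₁, ?_⟩
    convert Ideal.add_mem _ hp hq using 1
    simp only [map_add]; ring
  | mul_X p i hp =>
    obtain ⟨r₀, r₁, hp⟩ := hp
    rcases Fin.eq_zero_or_eq_succ i with rfl | ⟨j, rfl⟩
    · refine ⟨X 0 * X 1 * r₁, r₀, ?_⟩
      convert Ideal.add_mem _ (Ideal.mul_mem_right (X 0) _ hp)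
        (Ideal.mul_mem_right (rename Fin.succ r₁) _ (Ideal.mem_span_singleton_self _)) using 1
      simp [invariantRel₂]; ring
    · refine ⟨r₀ * X j, r₁ * X j, ?_⟩
      convert Ideal.mul_mem_right (X j.succ) _ hp using 1
      simp only [map_mul, rename_X]; ring

end CommRing

section Field

variable {K : Type*} [Field K] [NeZero (2 : K)]

theorem mem_range_comp_invariantMap {B : Type*} [Ring B] [Algebra K B]
    (π : MvPolynomial (Fin 3) K →ₐ[K] B) {p : MvPolynomial (Fin 3) K}
    (hp : π (negH4H6 p) = π p) : π p ∈ (π.comp invariantMap).range := by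
  obtain ⟨u, d, rfl, hd⟩ : ∃ u d, p = invariantMap u + d ∧ negH4H6 d = -d := by
    obtain ⟨u, v, s, rfl⟩ := exists_eq_invariantMap_add p
    refine ⟨u, X 0 * invariantMap v + X 1 * invariantMap s, add_assoc .., ?_⟩
    simp only [map_add, map_mul, negH4H6_invariantMap]
    simp [negH4H6]; ring
  rw [map_add, negH4H6_invariantMap, hd, map_add, map_add, map_neg, add_right_inj,
    neg_eq_iff_add_eq_zero, ← two_smul K, smul_eq_zero] at hp
  rw [map_add, hp.resolve_left two_ne_zero, add_zero]
  exact ⟨u, rfl⟩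

theorem eq_zero_of_sqH4H6_add_eq_zero {r₀ r₁ : MvPolynomial (Fin 3) K}
    (h : sqH4H6 r₀ + X 0 * X 1 * sqH4H6 r₁ = 0) : r₀ = 0 ∧ r₁ = 0 := by
  have h' := congrArg negH4 h
  have hX : negH4 (X 0 * X 1 : MvPolynomial (Fin 3) K) = -(X 0 * X 1) := by simp [negH4]
  rw [map_add, map_mul, negH4_sqH4H6, negH4_sqH4H6, hX, map_zero] at h'
  have h₀ : sqH4H6 r₀ = 0 := by
    have : (2 : K) • sqH4H6 r₀ = 0 := by rw [two_smul]; linear_combination h + h'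
    exact (smul_eq_zero.mp this).resolve_left two_ne_zero
  rw [h₀, zero_add] at h
  have h₁ : sqH4H6 r₁ = 0 :=
    (mul_eq_zero.mp h).resolve_left (mul_ne_zero (X_ne_zero _) (X_ne_zero _))
  exact ⟨(map_eq_zero_iff _ sqH4H6_injective).mp h₀, (map_eq_zero_iff _ sqH4H6_injective).mp h₁⟩

theorem ker_invariantMap :
    RingHom.ker (invariantMap (K := K)) = Ideal.span {invariantRel₂} := by
  have hle : Ideal.span {invariantRel₂} ≤ RingHom.ker (invariantMap (K := K)) := by
    rw [Ideal.span_le, Set.singleton_subset_iff]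
    exact invariantMap_invariantRel₂
  refine le_antisymm (fun q hq => ?_) hle
  obtain ⟨r₀, r₁, hr⟩ := exists_sub_mem_span_invariantRel₂ q
  have hsum : sqH4H6 r₀ + X 0 * X 1 * sqH4H6 r₁ = 0 := by
    have := hle hr
    rw [RingHom.mem_ker] at hq this
    rw [map_sub, hq, zero_sub, neg_eq_zero, map_add, map_mul, invariantMap_rename_succ,
      invariantMap_rename_succ] at this
    simpa [invariantMap] using this
  obtain ⟨rfl, rfl⟩ := eq_zero_of_sqH4H6_add_eq_zero hsum
  simpa using hr

theorem ker_mk_comp_invariantMap :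
    RingHom.ker ((Ideal.Quotient.mkₐ K (Ideal.span {shimuraRel})).comp invariantMap) =
      Ideal.span {invariantRel₁, invariantRel₂} := by
  ext q
  rw [RingHom.mem_ker, AlgHom.comp_apply, Ideal.Quotient.mkₐ_eq_mk,
    Ideal.Quotient.eq_zero_iff_mem, Ideal.mem_span_singleton']
  constructor
  · rintro ⟨c, hc⟩
    have hfix : negH4H6 c = c := by
      refine mul_right_cancel₀ shimuraRel_ne_zero ?_
      rw [← negH4H6_shimuraRel, ← map_mul, negH4H6_shimuraRel, hc, negH4H6_invariantMap]
    obtain ⟨d, rfl⟩ : ∃ d, invariantMap d = c := by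
      simpa using mem_range_comp_invariantMap (AlgHom.id K _) (p := c) (by simpa using hfix)
    have hd : q - d * invariantRel₁ ∈ RingHom.ker invariantMap := by
      rw [RingHom.mem_ker, map_sub, map_mul, invariantMap_invariantRel₁, hc, sub_self]
    rw [ker_invariantMap, Ideal.mem_span_singleton'] at hd
    obtain ⟨b, hb⟩ := hd
    exact Ideal.mem_span_pair.mpr ⟨d, b, by rw [hb]; ring⟩
  · intro hq
    obtain ⟨a, b, rfl⟩ := Ideal.mem_span_pair.mp hq
    exact ⟨invariantMap a, by simp [invariantMap_invariantRel₁, invariantMap_invariantRel₂]⟩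

theorem range_comp_invariantMap {B : Type*} [Ring B] [Algebra K B]
    {π : MvPolynomial (Fin 3) K →ₐ[K] B} (hπ : Function.Surjective π) (σ : B →ₐ[K] B)
    (hσ : σ.comp π = π.comp negH4H6) :
    (π.comp invariantMap).range = AlgHom.equalizer σ (AlgHom.id K B) := by
  ext t
  rw [AlgHom.mem_range, AlgHom.mem_equalizer, AlgHom.id_apply]
  constructor
  · rintro ⟨u, rfl⟩
    rw [AlgHom.comp_apply, ← AlgHom.comp_apply σ π, hσ, AlgHom.comp_apply, negH4H6_invariantMap]
  · intro ht
    obtain ⟨p, rfl⟩ := hπ t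
    exact mem_range_comp_invariantMap π (by rw [← AlgHom.comp_apply, ← hσ]; exact ht)

end Field

noncomputable abbrev mkA6 : MvPolynomial (Fin 3) ℚ →ₐ[ℚ] A6 := Ideal.Quotient.mkₐ ℚ _

theorem mkA6_comp_invariantMap :
    mkA6.comp invariantMap = aeval (![h4 * h6, h4 ^ 2, h6 ^ 2, h12] : Fin 4 → A6) := by
  ext i : 1
  fin_cases i <;> simp [invariantMap, h4, h6, h12, Ideal.Quotient.mkₐ_eq_mk]

theorem sigma_comp_mkA6 (σ : A6 ≃ₐ[ℚ] A6)
    (hσ4 : σ h4 = -h4) (hσ6 : σ h6 = -h6) (hσ12 : σ h12 = h12) :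
    (σ : A6 →ₐ[ℚ] A6).comp mkA6 = mkA6.comp negH4H6 := by
  ext i : 1
  fin_cases i
  · simpa [negH4H6, Ideal.Quotient.mkₐ_eq_mk, h4] using hσ4
  · simpa [negH4H6, Ideal.Quotient.mkₐ_eq_mk, h6] using hσ6
  · simpa [negH4H6, Ideal.Quotient.mkₐ_eq_mk, h12] using hσ12

end ShimuraCurve6

open ShimuraCurve6

/-- if `σ` is the ℚ-algebra involution of `A₆` with `σ(h₄) = −h₄`,
`σ(h₆) = −h₆`, `σ(h₁₂) = h₁₂`, then the map `w ↦ h₄h₆, x ↦ h₄², y ↦ h₆², z ↦ h₁₂`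
(with `w, x, y, z` the variables `X 0, X 1, X 2, X 3`) kills both `z² + 3y² + x³` and
`w² − xy` and induces `ℚ[w,x,y,z]/(z² + 3y² + x³, w² − xy) ≅ A₆^σ`. -/
theorem stmt_11 (σ : A6 ≃ₐ[ℚ] A6)
    (hσ4 : σ h4 = -h4) (hσ6 : σ h6 = -h6) (hσ12 : σ h12 = h12) :
    aeval (![h4 * h6, h4 ^ 2, h6 ^ 2, h12] : Fin 4 → A6)
        ((X 3 : MvPolynomial (Fin 4) ℚ) ^ 2 + 3 * X 2 ^ 2 + X 1 ^ 3) = 0 ∧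
    aeval (![h4 * h6, h4 ^ 2, h6 ^ 2, h12] : Fin 4 → A6)
        ((X 0 : MvPolynomial (Fin 4) ℚ) ^ 2 - X 1 * X 2) = 0 ∧
    ∃ ψ : (MvPolynomial (Fin 4) ℚ ⧸
            Ideal.span {(X 3 : MvPolynomial (Fin 4) ℚ) ^ 2 + 3 * X 2 ^ 2 + X 1 ^ 3,
              (X 0 : MvPolynomial (Fin 4) ℚ) ^ 2 - X 1 * X 2})
          ≃ₐ[ℚ] (AlgHom.equalizer (σ : A6 →ₐ[ℚ] A6) (AlgHom.id ℚ A6)),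
      ∀ q : MvPolynomial (Fin 4) ℚ,
        (ψ (Ideal.Quotient.mk _ q) : A6) =
          aeval (![h4 * h6, h4 ^ 2, h6 ^ 2, h12] : Fin 4 → A6) q := by
  have hker : RingHom.ker (mkA6.comp invariantMap) = _ := ker_mk_comp_invariantMap
  have hrange := range_comp_invariantMap (Ideal.Quotient.mkₐ_surjective ℚ _) _
    (sigma_comp_mkA6 σ hσ4 hσ6 hσ12)
  rw [mkA6_comp_invariantMap] at hker hrange
  refine ⟨RingHom.mem_ker.mp (hker ▸ Ideal.subset_span (Set.mem_insert _ _)),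
    RingHom.mem_ker.mp (hker ▸ Ideal.subset_span (Set.mem_insert_of_mem _ rfl)),
    (Ideal.quotientEquivAlgOfEq ℚ hker.symm).trans
      ((Ideal.quotientKerEquivRange _).trans (Subalgebra.equivOfEq _ _ hrange)),
    fun q => rfl⟩
end

section
/- Let A₆ = ℚ[h₄,h₆,h₁₂]/(h₁₂² + 3h₆⁴ + h₄⁶) and let G be the group of ℚ-algebra automorphisms of A₆ generated by the two involutions σ₂ (h₄ ↦ −h₄, h₆ ↦ h₆, h₁₂ ↦ −h₁₂) and σ₃ (h₄ ↦ −h₄, h₆ ↦ −h₆, h₁₂ ↦ h₁₂). Then the ℚ-algebra homomorphism ℚ[x,y,z] → A₆ given by x ↦ h₄², y ↦ h₆², z ↦ h₄h₆h₁₂ sends z² + 3xy³ + x⁴y to 0 and induces a ℚ-algebra isomorphism ℚ[x,y,z]/(z² + 3xy³ + x⁴y) ≅ A₆^G, where A₆^G is the subalgebra of elements of A₆ fixed by every element of G. -/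
open MvPolynomial

/-- The subalgebra of elements of an `R`-algebra `A` fixed by every element of a group `G`
of `R`-algebra automorphisms of `A`. -/
def fixedSubalgebra (R A : Type*) [CommSemiring R] [Semiring A] [Algebra R A]
    (G : Subgroup (A ≃ₐ[R] A)) : Subalgebra R A where
  carrier := {a : A | ∀ g ∈ G, g a = a}
  mul_mem' := fun ha hb g hg => by
    rw [map_mul, ha g hg, hb g hg]
  one_mem' := fun g _ => map_one g
  add_mem' := fun ha hb g hg => by
    rw [map_add, ha g hg, hb g hg]
  zero_mem' := fun g _ => map_zero g
  algebraMap_mem' := fun r g _ => g.commutes r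

/-! The operator `(1 + σ₂)(1 + σ₃)` acts on the monomial `h₄^a h₆^b h₁₂^c` by the scalar
`(1 + (-1)^(a+c))(1 + (-1)^(a+b))`, so it is `4` on an invariant element and maps everything into
the span of the monomials with `a ≡ b ≡ c (mod 2)`. Each of these is a product of `h₄²`, `h₆²`,
`h₁₂² = -(3h₆⁴ + h₄⁶)` and at most one `h₄h₆h₁₂`, hence `x, y, z ↦ h₄², h₆², h₄h₆h₁₂` is onto
`A₆^G`.

For the kernel, reduce modulo `z² + 3xy³ + x⁴y`, monic in `z`, to `a + b z` with `a, b ∈ ℚ[x, y]`.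
Its image is the class of `a(X₀², X₁²) + X₀X₁ b(X₀², X₁²) X₂`, a polynomial of degree `≤ 1` in `X₂`;
it can only be divisible by `X₂² + 3X₁⁴ + X₀⁶` if it vanishes, which forces `a = b = 0`. -/

theorem mem_fixedSubalgebra_closure_iff {R A : Type*} [CommSemiring R] [Semiring A]
    [Algebra R A] {S : Set (A ≃ₐ[R] A)} {a : A} :
    a ∈ fixedSubalgebra R A (Subgroup.closure S) ↔ ∀ g ∈ S, g a = a :=
  ⟨fun h g hg => h g (Subgroup.subset_closure hg), fun h _ hg =>
    (Subgroup.closure_le (MulAction.stabilizer (A ≃ₐ[R] A) a)).2 h hg⟩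

namespace MvPolynomial

variable {σ R : Type*} [CommRing R]

theorem eq_zero_of_dvd_of_degreeOf_lt [NoZeroDivisors R] {p q : MvPolynomial σ R} {i : σ}
    (h : p ∣ q) (hq : q.degreeOf i < p.degreeOf i) : q = 0 := by
  obtain ⟨t, rfl⟩ := h
  by_contra hpt
  rw [degreeOf_mul_eq (left_ne_zero_of_mul hpt) (right_ne_zero_of_mul hpt)] at hq
  omega

theorem eq_zero_of_add_mul_X_eq_zero {u w : MvPolynomial σ R} {i : σ}
    (hu : u.degreeOf i = 0) (hw : w.degreeOf i = 0) (h : u + w * X i = 0) :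
    u = 0 ∧ w = 0 := by
  have hw0 : w = 0 := by
    by_contra hw0
    have := (degreeOf_mul_X_eq_degreeOf_add_one_iff i w).2 hw0
    rw [eq_neg_of_add_eq_zero_right h, degreeOf_neg, hu] at this
    omega
  subst hw0
  simpa using h

theorem degreeOf_last_rename_castSucc {n : ℕ} (p : MvPolynomial (Fin n) R) :
    (rename Fin.castSucc p).degreeOf (Fin.last n) = 0 := by
  classical
  by_contra h
  obtain ⟨j, -, hj⟩ := Finset.mem_image.1 (vars_rename _ p (mem_vars_iff_degreeOf_ne_zero.2 h))
  exact Fin.castSucc_ne_last j hj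

end MvPolynomial

noncomputable def a6Rel : MvPolynomial (Fin 3) ℚ := X 2 ^ 2 + 3 * X 1 ^ 4 + X 0 ^ 6

noncomputable def invariantsRel : MvPolynomial (Fin 3) ℚ :=
  X 2 ^ 2 + 3 * X 0 * X 1 ^ 3 + X 0 ^ 4 * X 1

noncomputable def invariantsHom : MvPolynomial (Fin 3) ℚ →ₐ[ℚ] A6 :=
  aeval ![h4 ^ 2, h6 ^ 2, h4 * h6 * h12]

theorem h12_sq : h12 ^ 2 = -(3 * h6 ^ 4 + h4 ^ 6) := by
  have h : Ideal.Quotient.mk (Ideal.span {a6Rel}) a6Rel = 0 :=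
    Ideal.Quotient.eq_zero_iff_mem.2 (Ideal.subset_span rfl)
  rw [a6Rel, map_add, map_add, map_mul, map_pow, map_pow, map_pow, map_ofNat] at h
  change h12 ^ 2 + 3 * h6 ^ 4 + h4 ^ 6 = 0 at h
  linear_combination h

theorem invariantsHom_invariantsRel : invariantsHom invariantsRel = 0 := by
  simp only [invariantsHom, invariantsRel, map_add, map_pow, map_mul, aeval_X, aeval_ofNat,
    Matrix.cons_val, Matrix.cons_val_zero, Matrix.cons_val_one]
  linear_combination h4 ^ 2 * h6 ^ 2 * h12_sq

theorem map_invariantsHom (σ : A6 ≃ₐ[ℚ] A6) (h4' : σ (h4 ^ 2) = h4 ^ 2)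
    (h6' : σ (h6 ^ 2) = h6 ^ 2) (h12' : σ (h4 * h6 * h12) = h4 * h6 * h12)
    (q : MvPolynomial (Fin 3) ℚ) : σ (invariantsHom q) = invariantsHom q := by
  rw [invariantsHom, ← σ.coe_toAlgHom, comp_aeval_apply]
  congr
  funext i
  fin_cases i <;> assumption

theorem monomial_mem_range {a b c : ℕ} (hac : Even (a + c)) (hab : Even (a + b)) :
    h4 ^ a * h6 ^ b * h12 ^ c ∈ invariantsHom.range := by
  have h4_sq : h4 ^ 2 ∈ invariantsHom.range := ⟨X 0, by simp [invariantsHom]⟩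
  have h6_sq : h6 ^ 2 ∈ invariantsHom.range := ⟨X 1, by simp [invariantsHom]⟩
  have h12_sq_mem : h12 ^ 2 ∈ invariantsHom.range :=
    ⟨-(3 * X 1 ^ 2 + X 0 ^ 3), by
      simp only [invariantsHom, AlgHom.toRingHom_eq_coe, RingHom.coe_coe, map_neg, map_add,
        map_mul, map_pow, aeval_X, aeval_ofNat, Matrix.cons_val_zero, Matrix.cons_val_one, h12_sq]
      ring⟩
  obtain ⟨k, rfl | rfl⟩ := Nat.even_or_odd' c
  · obtain ⟨i, rfl⟩ : Even a := by simpa [parity_simps] using hac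
    obtain ⟨j, rfl⟩ : Even b := by simpa [parity_simps] using hab
    have : h4 ^ (i + i) * h6 ^ (j + j) * h12 ^ (2 * k) =
        (h4 ^ 2) ^ i * (h6 ^ 2) ^ j * (h12 ^ 2) ^ k := by ring
    rw [this]
    exact mul_mem (mul_mem (pow_mem h4_sq i) (pow_mem h6_sq j)) (pow_mem h12_sq_mem k)
  · obtain ⟨i, rfl⟩ : Odd a := by simpa [parity_simps] using hac
    obtain ⟨j, rfl⟩ : Odd b := by simpa [parity_simps] using hab
    have : h4 ^ (2 * i + 1) * h6 ^ (2 * j + 1) * h12 ^ (2 * k + 1) =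
        (h4 ^ 2) ^ i * (h6 ^ 2) ^ j * (h12 ^ 2) ^ k * (h4 * h6 * h12) := by ring
    rw [this]
    exact mul_mem (mul_mem (mul_mem (pow_mem h4_sq i) (pow_mem h6_sq j)) (pow_mem h12_sq_mem k))
      ⟨X 2, by simp [invariantsHom]⟩

theorem sign_projection_mem_range (a b c : ℕ) :
    (1 + (-1) ^ (a + c)) * (1 + (-1) ^ (a + b)) * (h4 ^ a * h6 ^ b * h12 ^ c) ∈
      invariantsHom.range := by
  rcases Nat.even_or_odd (a + c) with hac | hac
  · rcases Nat.even_or_odd (a + b) with hab | hab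
    · rw [Even.neg_one_pow (α := A6) hac, Even.neg_one_pow (α := A6) hab]
      have two_mem : (1 + 1 : A6) ∈ invariantsHom.range := add_mem (one_mem _) (one_mem _)
      exact mul_mem (mul_mem two_mem two_mem) (monomial_mem_range hac hab)
    · rw [Odd.neg_one_pow (α := A6) hab, add_neg_cancel, mul_zero, zero_mul]
      exact zero_mem _
  · rw [Odd.neg_one_pow (α := A6) hac, add_neg_cancel, zero_mul, zero_mul]
    exact zero_mem _

theorem map_monomial_of_sigma2 (σ : A6 ≃ₐ[ℚ] A6) (h4' : σ h4 = -h4) (h6' : σ h6 = h6)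
    (h12' : σ h12 = -h12) (a b c : ℕ) :
    σ (h4 ^ a * h6 ^ b * h12 ^ c) = (-1) ^ (a + c) * (h4 ^ a * h6 ^ b * h12 ^ c) := by
  simp only [map_mul, map_pow, h4', h6', h12']
  ring

theorem map_monomial_of_sigma3 (σ : A6 ≃ₐ[ℚ] A6) (h4' : σ h4 = -h4) (h6' : σ h6 = -h6)
    (h12' : σ h12 = h12) (a b c : ℕ) :
    σ (h4 ^ a * h6 ^ b * h12 ^ c) = (-1) ^ (a + b) * (h4 ^ a * h6 ^ b * h12 ^ c) := by
  simp only [map_mul, map_pow, h4', h6', h12']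
  ring

theorem mk_monomial (d : Fin 3 →₀ ℕ) (r : ℚ) :
    (Ideal.Quotient.mk _ (monomial d r) : A6) =
      algebraMap ℚ A6 r * (h4 ^ d 0 * h6 ^ d 1 * h12 ^ d 2) := by
  rw [monomial_eq, Finsupp.prod_fintype _ _ (fun _ => pow_zero _), Fin.prod_univ_three]
  simp only [map_mul, map_pow, ← mul_assoc]
  rfl

theorem sum_orbit_mem_range (σ₂ σ₃ : A6 ≃ₐ[ℚ] A6)
    (hσ₂4 : σ₂ h4 = -h4) (hσ₂6 : σ₂ h6 = h6) (hσ₂12 : σ₂ h12 = -h12)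
    (hσ₃4 : σ₃ h4 = -h4) (hσ₃6 : σ₃ h6 = -h6) (hσ₃12 : σ₃ h12 = h12) (x : A6) :
    x + σ₂ x + σ₃ x + σ₂ (σ₃ x) ∈ invariantsHom.range := by
  obtain ⟨p, rfl⟩ := Ideal.Quotient.mk_surjective x
  induction p using MvPolynomial.induction_on' with
  | monomial d r =>
    rw [mk_monomial]
    convert mul_mem (Subalgebra.algebraMap_mem _ r) (sign_projection_mem_range (d 0) (d 1) (d 2))
      using 1
    simp only [map_mul, AlgEquiv.commutes, map_pow, map_neg, map_one,
      map_monomial_of_sigma2 σ₂ hσ₂4 hσ₂6 hσ₂12, map_monomial_of_sigma3 σ₃ hσ₃4 hσ₃6 hσ₃12]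
    ring
  | add p q hp hq =>
    convert add_mem hp hq using 1
    simp only [map_add]
    abel

theorem mem_range_of_fixed (σ₂ σ₃ : A6 ≃ₐ[ℚ] A6)
    (hσ₂4 : σ₂ h4 = -h4) (hσ₂6 : σ₂ h6 = h6) (hσ₂12 : σ₂ h12 = -h12)
    (hσ₃4 : σ₃ h4 = -h4) (hσ₃6 : σ₃ h6 = -h6) (hσ₃12 : σ₃ h12 = h12) {x : A6}
    (h₂ : σ₂ x = x) (h₃ : σ₃ x = x) : x ∈ invariantsHom.range := by
  have h := sum_orbit_mem_range σ₂ σ₃ hσ₂4 hσ₂6 hσ₂12 hσ₃4 hσ₃6 hσ₃12 x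
  rw [h₃, h₂] at h
  convert Subalgebra.smul_mem _ h (1 / 4 : ℚ) using 1
  module

theorem exists_sub_mem_span_invariantsRel (p : MvPolynomial (Fin 3) ℚ) :
    ∃ a b : MvPolynomial (Fin 2) ℚ,
      p - (rename Fin.castSucc a + rename Fin.castSucc b * X 2) ∈ Ideal.span {invariantsRel} := by
  induction p using MvPolynomial.induction_on with
  | C r => exact ⟨C r, 0, by simp⟩
  | add p q hp hq =>
    obtain ⟨a, b, hab⟩ := hp
    obtain ⟨a', b', hab'⟩ := hq
    refine ⟨a + a', b + b', ?_⟩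
    convert add_mem hab hab' using 1
    simp only [map_add]
    ring
  | mul_X p i hp =>
    obtain ⟨a, b, hab⟩ := hp
    induction i using Fin.lastCases with
    | cast j =>
      refine ⟨a * X j, b * X j, ?_⟩
      convert Ideal.mul_mem_right (X j.castSucc) _ hab using 1
      simp only [map_mul, rename_X]
      ring
    | last =>
      rw [show (Fin.last 2 : Fin 3) = 2 from rfl]
      -- `z² ≡ -(3xy³ + x⁴y)` modulo `invariantsRel`
      refine ⟨-(b * (3 * X 0 * X 1 ^ 3 + X 0 ^ 4 * X 1)), a, ?_⟩
      convert add_mem (Ideal.mul_mem_right (X 2) _ hab)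
        (Ideal.mul_mem_left _ (rename Fin.castSucc b) (Ideal.subset_span rfl)) using 1
      simp only [invariantsRel, map_neg, map_mul, map_add, map_ofNat, map_pow, rename_X,
        Fin.castSucc_zero, Fin.castSucc_one]
      ring

theorem degreeOf_a6Rel : a6Rel.degreeOf 2 = 2 := by
  have h1 : (3 * X 1 ^ 4 : MvPolynomial (Fin 3) ℚ).degreeOf 2 = 0 := by
    rw [← map_ofNat C 3, degreeOf_C_mul (hc := by simp), degreeOf_X_pow_of_ne _ (by decide)]
  have h0 : (X 0 ^ 6 : MvPolynomial (Fin 3) ℚ).degreeOf 2 = 0 :=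
    degreeOf_X_pow_of_ne _ (by decide)
  have h2 : (X 2 ^ 2 + 3 * X 1 ^ 4 : MvPolynomial (Fin 3) ℚ).degreeOf 2 = 2 := by
    rw [degreeOf_add_eq_of_degreeOf_lt] <;> simp only [degreeOf_X_self_pow, h1, Nat.ofNat_pos]
  rw [a6Rel, degreeOf_add_eq_of_degreeOf_lt] <;> simp only [h2, h0, Nat.ofNat_pos]

theorem eq_zero_of_mk_add_mul_h12_eq_zero {u w : MvPolynomial (Fin 2) ℚ}
    (h : (Ideal.Quotient.mk _ (rename Fin.castSucc u) : A6) +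
      Ideal.Quotient.mk _ (rename Fin.castSucc w) * h12 = 0) :
    u = 0 ∧ w = 0 := by
  have hu : (rename Fin.castSucc u).degreeOf 2 = 0 := degreeOf_last_rename_castSucc u
  have hw : (rename Fin.castSucc w).degreeOf 2 = 0 := degreeOf_last_rename_castSucc w
  have hc : (Ideal.Quotient.mk _ (rename Fin.castSucc u + rename Fin.castSucc w * X 2) : A6) =
      0 := by
    rw [map_add, map_mul]
    exact h
  have hdeg : (rename Fin.castSucc u + rename Fin.castSucc w * X 2).degreeOf 2 <
      a6Rel.degreeOf 2 := by
    have := degreeOf_add_le 2 (rename Fin.castSucc u) (rename Fin.castSucc w * X 2)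
    have := degreeOf_mul_X_self 2 (rename Fin.castSucc w)
    rw [degreeOf_a6Rel]
    omega
  obtain ⟨hu, hw⟩ := eq_zero_of_add_mul_X_eq_zero hu hw <| eq_zero_of_dvd_of_degreeOf_lt
    (Ideal.mem_span_singleton.1 (Ideal.Quotient.eq_zero_iff_mem.1 hc)) hdeg
  exact ⟨rename_injective _ (Fin.castSucc_injective _) (by simpa using hu),
    rename_injective _ (Fin.castSucc_injective _) (by simpa using hw)⟩

theorem invariantsHom_rename_castSucc (a : MvPolynomial (Fin 2) ℚ) :
    invariantsHom (rename Fin.castSucc a) =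
      Ideal.Quotient.mk _ (rename Fin.castSucc (expand 2 a)) := by
  have : invariantsHom.comp (rename Fin.castSucc) =
      (Ideal.Quotient.mkₐ ℚ _).comp ((rename Fin.castSucc).comp (expand 2)) := by
    ext i
    fin_cases i <;> simp [invariantsHom, h4, h6]
  exact DFunLike.congr_fun this a

theorem ker_invariantsHom : RingHom.ker invariantsHom = Ideal.span {invariantsRel} := by
  have hspan : Ideal.span {invariantsRel} ≤ RingHom.ker invariantsHom :=
    Ideal.span_le.2 (Set.singleton_subset_iff.2 invariantsHom_invariantsRel)
  refine le_antisymm (fun p hp => ?_) hspan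
  obtain ⟨a, b, hab⟩ := exists_sub_mem_span_invariantsRel p
  have h := hspan hab
  rw [RingHom.mem_ker, map_sub, RingHom.mem_ker.1 hp, zero_sub, neg_eq_zero, map_add, map_mul,
    invariantsHom_rename_castSucc, invariantsHom_rename_castSucc] at h
  have hz : invariantsHom (X 2) = h4 * h6 * h12 := by simp [invariantsHom]
  rw [hz] at h
  obtain ⟨ha, hb⟩ := eq_zero_of_mk_add_mul_h12_eq_zero (u := expand 2 a)
    (w := X 0 * X 1 * expand 2 b) (by
      rw [map_mul, map_mul, map_mul, rename_X, rename_X]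
      change _ + h4 * h6 * _ * h12 = 0
      linear_combination h)
  have ha : a = 0 := expand_injective two_pos (by simpa using ha)
  have hb : b = 0 := expand_injective two_pos (by simpa [X_ne_zero] using hb)
  simpa [ha, hb] using hab

/-- if `G` is the group of ℚ-algebra automorphisms of `A₆` generated by the
involutions `σ₂ : (h₄,h₆,h₁₂) ↦ (−h₄,h₆,−h₁₂)` and `σ₃ : (h₄,h₆,h₁₂) ↦ (−h₄,−h₆,h₁₂)`,
then the map `x ↦ h₄², y ↦ h₆², z ↦ h₄h₆h₁₂` kills `z² + 3xy³ + x⁴y` and induces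
`ℚ[x,y,z]/(z² + 3xy³ + x⁴y) ≅ A₆^G`. -/
theorem stmt_13 (σ₂ σ₃ : A6 ≃ₐ[ℚ] A6)
    (hσ₂4 : σ₂ h4 = -h4) (hσ₂6 : σ₂ h6 = h6) (hσ₂12 : σ₂ h12 = -h12)
    (hσ₃4 : σ₃ h4 = -h4) (hσ₃6 : σ₃ h6 = -h6) (hσ₃12 : σ₃ h12 = h12) :
    aeval (![h4 ^ 2, h6 ^ 2, h4 * h6 * h12] : Fin 3 → A6)
        ((X 2 : MvPolynomial (Fin 3) ℚ) ^ 2 + 3 * X 0 * X 1 ^ 3 + X 0 ^ 4 * X 1) = 0 ∧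
    ∃ ψ : (MvPolynomial (Fin 3) ℚ ⧸
            Ideal.span
              {(X 2 : MvPolynomial (Fin 3) ℚ) ^ 2 + 3 * X 0 * X 1 ^ 3 + X 0 ^ 4 * X 1})
          ≃ₐ[ℚ] (fixedSubalgebra ℚ A6 (Subgroup.closure {σ₂, σ₃})),
      ∀ q : MvPolynomial (Fin 3) ℚ,
        (ψ (Ideal.Quotient.mk _ q) : A6) =
          aeval (![h4 ^ 2, h6 ^ 2, h4 * h6 * h12] : Fin 3 → A6) q := by
  have hrange : invariantsHom.range = fixedSubalgebra ℚ A6 (Subgroup.closure {σ₂, σ₃}) := by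
    ext x
    simp only [mem_fixedSubalgebra_closure_iff, Set.mem_insert_iff, Set.mem_singleton_iff,
      forall_eq_or_imp, forall_eq]
    constructor
    · rintro ⟨q, rfl⟩
      constructor <;> apply map_invariantsHom <;>
        simp only [map_mul, map_pow, hσ₂4, hσ₂6, hσ₂12, hσ₃4, hσ₃6, hσ₃12] <;> ring
    · rintro ⟨h₂, h₃⟩
      exact mem_range_of_fixed σ₂ σ₃ hσ₂4 hσ₂6 hσ₂12 hσ₃4 hσ₃6 hσ₃12 h₂ h₃
  exact ⟨invariantsHom_invariantsRel,
    (Ideal.quotientEquivAlgOfEq ℚ ker_invariantsHom.symm).trans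
      ((Ideal.quotientKerEquivRange invariantsHom).trans (Subalgebra.equivOfEq _ _ hrange)),
    fun q => rfl⟩
end
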